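/- (Doubling inequality.) Let n ≥ 1, let a₁ < b₁ and r > 0 with a₁ < b₁ − r, and let B' = [a₁, b₁ − r] × K ⊆ ℝⁿ where K = ∏ᵢ₌₂ⁿ [aᵢ, bᵢ] with aᵢ < bᵢ. Define η(t) = 1/(b₁ − t) − 1/(b₁ − a₁). Let A : B' → Sym(n) be a map with A(x) positive definite for every x, and let b : B' → ℝ be continuous and positive. Assume the Jacobi inequality holds in the viscosity sense: for every point p in the interior of B' and every C² function ψ defined near p with ψ ≥ b near p and ψ(p) = b(p), one has Σᵢⱼ Aᵢⱼ(p) ∂ᵢⱼψ(p) ≥ 2 Σᵢⱼ Aᵢⱼ(p) ∂ᵢψ(p) ∂ⱼψ(p) / ψ(p). Then sup_{x ∈ B'} η(x₁) b(x) = sup_{x ∈ ∂B'} η(x₁) b(x) ≤ r⁻¹ · sup_{x ∈ R} b(x), where R = ∂B' \ {x ∈ B' : x₁ = a₁}. -/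

import Mathlib

open Set Filter Metric Asymptotics

noncomputable section

def hessianMatrix (n : ℕ) (φ : EuclideanSpace ℝ (Fin n) → ℝ) (x : EuclideanSpace ℝ (Fin n)) :
    Matrix (Fin n) (Fin n) ℝ :=
  Matrix.of fun i j =>
    iteratedFDeriv ℝ 2 φ x ![EuclideanSpace.single i 1, EuclideanSpace.single j 1]

section Helpers

theorem DI.pibox_pre {n : ℕ} (S : Fin n → Set ℝ) :
    {x : EuclideanSpace ℝ (Fin n) | ∀ i, x i ∈ S i} =
      ⇑(EuclideanSpace.equiv (Fin n) ℝ).toHomeomorph ⁻¹' (univ.pi S) := by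
  ext x; simp [Set.mem_pi]

theorem DI.pibox_interior {n : ℕ} (S : Fin n → Set ℝ) :
    interior {x : EuclideanSpace ℝ (Fin n) | ∀ i, x i ∈ S i} =
      {x : EuclideanSpace ℝ (Fin n) | ∀ i, x i ∈ interior (S i)} := by
  rw [DI.pibox_pre, DI.pibox_pre,
    ← (EuclideanSpace.equiv (Fin n) ℝ).toHomeomorph.preimage_interior,
    interior_pi_set finite_univ]

theorem DI.pibox_compact {n : ℕ} (S : Fin n → Set ℝ) (hS : ∀ i, IsCompact (S i)) :
    IsCompact {x : EuclideanSpace ℝ (Fin n) | ∀ i, x i ∈ S i} := by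
  rw [DI.pibox_pre]
  exact (EuclideanSpace.equiv (Fin n) ℝ).toHomeomorph.isCompact_preimage.2
    (isCompact_univ_pi hS)

theorem DI.pibox_closed {n : ℕ} (S : Fin n → Set ℝ) (hS : ∀ i, IsClosed (S i)) :
    IsClosed {x : EuclideanSpace ℝ (Fin n) | ∀ i, x i ∈ S i} := by
  rw [DI.pibox_pre]
  exact (isClosed_set_pi fun i _ => hS i).preimage
    (EuclideanSpace.equiv (Fin n) ℝ).toHomeomorph.continuous

theorem DI.hess_comp {n : ℕ} (i0 : Fin n) (g : ℝ → ℝ) (s : Set ℝ) (hs : IsOpen s)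
    (hg : ContDiffOn ℝ 2 g s) (x₀ : EuclideanSpace ℝ (Fin n)) (ht : x₀ i0 ∈ s) (i j : Fin n) :
    iteratedFDeriv ℝ 2 (fun x => g (x i0)) x₀
      ![EuclideanSpace.single i 1, EuclideanSpace.single j 1]
      = (if i = i0 then 1 else 0) * (if j = i0 then 1 else 0) * deriv (deriv g) (x₀ i0) := by
  set L := EuclideanSpace.proj (𝕜 := ℝ) i0 with hL
  have hψ : (fun x : EuclideanSpace ℝ (Fin n) => g (x i0)) = g ∘ ⇑L := rfl
  have hpre : IsOpen (⇑L ⁻¹' s) := hs.preimage L.continuous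
  have hx : x₀ ∈ ⇑L ⁻¹' s := ht
  rw [hψ, ← iteratedFDerivWithin_of_isOpen 2 hpre hx,
    L.iteratedFDerivWithin_comp_right hg hs.uniqueDiffOn hpre.uniqueDiffOn ht le_rfl]
  rw [ContinuousMultilinearMap.compContinuousLinearMap_apply]
  rw [show L x₀ = x₀ i0 from rfl, iteratedFDerivWithin_of_isOpen 2 hs ht,
    iteratedFDeriv_apply_eq_iteratedDeriv_mul_prod]
  have h2 : iteratedDeriv 2 g = deriv (deriv g) := by
    rw [iteratedDeriv_succ, iteratedDeriv_one]
  rw [Fin.prod_univ_two, h2]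
  have hLv : ∀ v : EuclideanSpace ℝ (Fin n), L v = v i0 := fun _ => rfl
  have hm0 : L (EuclideanSpace.single i (1:ℝ)) = if i = i0 then 1 else 0 := by
    by_cases h : i = i0
    · simp [hLv, h, EuclideanSpace.single_apply]
    · simp [hLv, EuclideanSpace.single_apply, h, Ne.symm h]
  have hm1 : L (EuclideanSpace.single j (1:ℝ)) = if j = i0 then 1 else 0 := by
    by_cases h : j = i0
    · simp [hLv, h, EuclideanSpace.single_apply]
    · simp [hLv, EuclideanSpace.single_apply, h, Ne.symm h]
  simp only [Matrix.cons_val_zero, Matrix.cons_val_one, Matrix.head_cons, hm0, hm1, smul_eq_mul]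

theorem DI.grad_comp {n : ℕ} (i0 : Fin n) (g : ℝ → ℝ) (d : ℝ)
    (x₀ : EuclideanSpace ℝ (Fin n)) (hg : HasDerivAt g d (x₀ i0)) :
    gradient (fun x => g (x i0)) x₀ = d • EuclideanSpace.single i0 (1:ℝ) := by
  set L := EuclideanSpace.proj (𝕜 := ℝ) i0 with hL
  have hF : HasFDerivAt (fun x : EuclideanSpace ℝ (Fin n) => g (x i0)) (d • (L : _ →L[ℝ] ℝ)) x₀ :=
    hg.comp_hasFDerivAt x₀ L.hasFDerivAt
  have key : HasGradientAt (fun x : EuclideanSpace ℝ (Fin n) => g (x i0))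
      (d • EuclideanSpace.single i0 (1:ℝ)) x₀ := by
    rw [hasGradientAt_iff_hasFDerivAt]
    refine hF.congr_fderiv ?_
    ext y
    rw [InnerProductSpace.toDual_apply_apply]
    simp [real_inner_smul_left, EuclideanSpace.inner_single_left]
    exact Or.inl rfl
  exact key.gradient

set_option maxHeartbeats 1000000 in
theorem DI.scalar_calc (M B C t0 : ℝ) (s : Set ℝ) (hs : IsOpen s) (ht0 : t0 ∈ s)
    (hpos : ∀ t ∈ s, 0 < B - t ∧ 0 < (B - t)⁻¹ - C) :
    ContDiffOn ℝ 2 (fun t => M * ((B - t)⁻¹ - C)⁻¹) s ∧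
    HasDerivAt (fun t => M * ((B - t)⁻¹ - C)⁻¹)
      (-M * ((B - t0)^2)⁻¹ * (((B - t0)⁻¹ - C)^2)⁻¹) t0 ∧
    deriv (deriv (fun t => M * ((B - t)⁻¹ - C)⁻¹)) t0 =
      -2*M*((B - t0)^3)⁻¹ * (((B - t0)⁻¹ - C)^2)⁻¹
        + 2*M*((B - t0)^4)⁻¹ * (((B - t0)⁻¹ - C)^3)⁻¹ := by
  set g : ℝ → ℝ := fun t => M * ((B - t)⁻¹ - C)⁻¹ with hgdef
  set η : ℝ → ℝ := fun t => (B - t)⁻¹ - C with hηdef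
  have hBne : ∀ t ∈ s, B - t ≠ 0 := fun t ht => (hpos t ht).1.ne'
  have hηne : ∀ t ∈ s, η t ≠ 0 := fun t ht => (hpos t ht).2.ne'
  have hcd : ContDiffOn ℝ 2 g s := by
    have h1 : ContDiffOn ℝ 2 (fun t : ℝ => B - t) s :=
      (contDiff_const.sub contDiff_id).contDiffOn
    have h2 : ContDiffOn ℝ 2 (fun t : ℝ => (B - t)⁻¹ - C) s :=
      (h1.inv hBne).sub contDiffOn_const
    exact contDiffOn_const.mul (h2.inv hηne)
  have hηd : ∀ t ∈ s, HasDerivAt η (((B - t)^2)⁻¹) t := by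
    intro t ht
    have h1 : HasDerivAt (fun t : ℝ => B - t) (-1) t := (hasDerivAt_id t).const_sub B
    have h2 := (h1.inv (hBne t ht)).sub_const C
    refine h2.congr_deriv ?_
    field_simp
  have hgd : ∀ t ∈ s, HasDerivAt g (-M * ((B - t)^2)⁻¹ * ((η t)^2)⁻¹) t := by
    intro t ht
    have h2 := ((hηd t ht).inv (hηne t ht)).const_mul M
    refine h2.congr_deriv ?_
    field_simp
  refine ⟨hcd, by simpa using hgd t0 ht0, ?_⟩
  set G1 : ℝ → ℝ := fun t => -M * ((B - t)^2)⁻¹ * ((η t)^2)⁻¹ with hG1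
  have hev : deriv g =ᶠ[nhds t0] G1 := by
    filter_upwards [hs.mem_nhds ht0] with t ht
    exact (hgd t ht).deriv
  rw [hev.deriv_eq]
  have hu0 : HasDerivAt (fun t : ℝ => B - t) (-1) t0 := (hasDerivAt_id t0).const_sub B
  have h1 : HasDerivAt (fun t : ℝ => ((B - t)^2)⁻¹) (2*((B - t0)^3)⁻¹) t0 := by
    have := (hu0.pow 2).inv (pow_ne_zero 2 (hBne t0 ht0))
    refine this.congr_deriv ?_
    have h := (hpos t0 ht0).1
    simp only [Pi.pow_apply]
    field_simp
    ring
  have h2 : HasDerivAt (fun t : ℝ => ((η t)^2)⁻¹)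
      (-2*((B - t0)^2)⁻¹*((η t0)^3)⁻¹) t0 := by
    have := ((hηd t0 ht0).inv (hηne t0 ht0)).pow 2
    have := ((hηd t0 ht0).pow 2).inv (pow_ne_zero 2 (hηne t0 ht0))
    refine this.congr_deriv ?_
    have h := (hpos t0 ht0).2
    have h' := (hpos t0 ht0).1
    have h'' : η t0 ≠ 0 := hηne t0 ht0
    simp only [Pi.pow_apply]
    field_simp
    ring
  have h3 : HasDerivAt G1
      ((2*((B - t0)^3)⁻¹) * (-M) * ((η t0)^2)⁻¹
        + (-M * ((B - t0)^2)⁻¹) * (-2*((B - t0)^2)⁻¹*((η t0)^3)⁻¹)) t0 := by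
    have := ((h1.const_mul (-M)).mul h2)
    refine this.congr_deriv ?_
    ring
  rw [h3.deriv]
  have hηt : η t0 = (B - t0)⁻¹ - C := rfl
  rw [hηt]
  generalize (B - t0) = u
  ring

end Helpers


set_option maxHeartbeats 2000000 in
/-- **Doubling inequality.**  On the box `B' = [a₁, b₁ − r] × ∏ᵢ₌₂ⁿ [aᵢ, bᵢ]`, if a
positive continuous function `b` satisfies the Jacobi inequality
`Σ Aᵢⱼ ∂ᵢⱼψ ≥ 2 Σ Aᵢⱼ ∂ᵢψ ∂ⱼψ / ψ` in the viscosity sense for positive definite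
coefficients `A`, then with `η(t) = 1/(b₁ − t) − 1/(b₁ − a₁)` one has
`sup_{B'} η(x₁) b(x) = sup_{∂B'} η(x₁) b(x) ≤ r⁻¹ sup_R b`, where
`R = ∂B' \ {x₁ = a₁}`. -/
theorem doubling_inequality
    (n : ℕ) (hn : 0 < n) (a b : Fin n → ℝ) (r : ℝ) (hr : 0 < r)
    (hab1 : a ⟨0, hn⟩ < b ⟨0, hn⟩) (hab1r : a ⟨0, hn⟩ < b ⟨0, hn⟩ - r)
    (hab : ∀ i : Fin n, i ≠ ⟨0, hn⟩ → a i < b i)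
    -- the box `B' = [a₁, b₁ − r] × ∏ᵢ₌₂ⁿ [aᵢ, bᵢ]`
    (B' : Set (EuclideanSpace ℝ (Fin n)))
    (hB' : B' = {x : EuclideanSpace ℝ (Fin n) |
      x ⟨0, hn⟩ ∈ Icc (a ⟨0, hn⟩) (b ⟨0, hn⟩ - r) ∧
      ∀ i : Fin n, i ≠ ⟨0, hn⟩ → x i ∈ Icc (a i) (b i)})
    -- the one-dimensional Green's function `η`
    (η : ℝ → ℝ) (hη : ∀ t, η t = (b ⟨0, hn⟩ - t)⁻¹ - (b ⟨0, hn⟩ - a ⟨0, hn⟩)⁻¹)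
    -- the coefficients `A`, symmetric positive definite on `B'`
    (A : EuclideanSpace ℝ (Fin n) → Matrix (Fin n) (Fin n) ℝ)
    (hA : ∀ x ∈ B', (A x).IsSymm ∧ (A x).PosDef)
    -- the function `bf`, continuous and positive on `B'`
    (bf : EuclideanSpace ℝ (Fin n) → ℝ)
    (hbf_cont : ContinuousOn bf B') (hbf_pos : ∀ x ∈ B', 0 < bf x)
    -- the Jacobi inequality in the viscosity sense at interior points of `B'`
    (hJacobi : ∀ (ψ : EuclideanSpace ℝ (Fin n) → ℝ) (p : EuclideanSpace ℝ (Fin n)),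
      p ∈ interior B' → ContDiffAt ℝ 2 ψ p →
      (∀ᶠ y in nhds p, bf y ≤ ψ y) → ψ p = bf p →
      2 * (∑ i, ∑ j, A p i j * gradient ψ p i * gradient ψ p j) / ψ p ≤
        ∑ i, ∑ j, A p i j * hessianMatrix n ψ p i j) :
    sSup ((fun x => η (x ⟨0, hn⟩) * bf x) '' B') =
      sSup ((fun x => η (x ⟨0, hn⟩) * bf x) '' frontier B') ∧
    sSup ((fun x => η (x ⟨0, hn⟩) * bf x) '' B') ≤
      r⁻¹ * sSup (bf '' (frontier B' \ {x ∈ B' | x ⟨0, hn⟩ = a ⟨0, hn⟩})) := by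
  set i0 : Fin n := ⟨0, hn⟩ with hi0
  set f : EuclideanSpace ℝ (Fin n) → ℝ := fun x => η (x i0) * bf x with hf
  set ub : Fin n → ℝ := fun i => if i = i0 then b i0 - r else b i with hub
  have hub_lt : ∀ i, a i < ub i := by
    intro i
    by_cases h : i = i0
    · subst h; simpa [hub] using hab1r
    · simpa [hub, h] using hab i h
  have hB2 : B' = {x : EuclideanSpace ℝ (Fin n) | ∀ i, x i ∈ Icc (a i) (ub i)} := by
    rw [hB']
    ext x
    simp only [mem_setOf_eq]
    constructor
    · rintro ⟨h0, h⟩ i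
      by_cases hi : i = i0
      · subst hi; simpa [hub] using h0
      · simpa [hub, hi] using h i hi
    · intro h
      exact ⟨by simpa [hub] using h i0, fun i hi => by simpa [hub, hi] using h i⟩
  have hclosed : IsClosed B' := by
    rw [hB2]; exact DI.pibox_closed _ fun i => isClosed_Icc
  have hcpt : IsCompact B' := by
    rw [hB2]; exact DI.pibox_compact _ fun i => isCompact_Icc
  have hInt : interior B' = {x : EuclideanSpace ℝ (Fin n) | ∀ i, x i ∈ Ioo (a i) (ub i)} := by
    rw [hB2, DI.pibox_interior]
    simp only [interior_Icc]
  -- a point in the interior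
  set z : EuclideanSpace ℝ (Fin n) := (WithLp.equiv 2 _).symm (fun i => (a i + ub i) / 2) with hz
  have hz_coord : ∀ i, z i = (a i + ub i) / 2 := fun i => rfl
  have hz_int : z ∈ interior B' := by
    rw [hInt]
    intro i
    constructor
    · rw [hz_coord]; linarith [hub_lt i]
    · rw [hz_coord]; linarith [hub_lt i]
  have hzB : z ∈ B' := interior_subset hz_int
  have hne : B'.Nonempty := ⟨z, hzB⟩
  -- basic facts about η
  have hub0 : ub i0 = b i0 - r := by simp [hub]
  have hηpos : ∀ t, a i0 < t → t < b i0 → 0 < η t := by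
    intro t h1 h2
    rw [hη]
    have h3 : 0 < b i0 - t := by linarith
    have h4 : b i0 - t < b i0 - a i0 := by linarith
    have := inv_strictAnti₀ h3 h4
    linarith
  have hBx : ∀ x ∈ B', x i0 ≤ b i0 - r ∧ a i0 ≤ x i0 := by
    intro x hx
    rw [hB2] at hx
    have := hx i0
    rw [hub0] at this
    exact ⟨this.2, this.1⟩
  -- continuity of f on B'
  have hf_cont : ContinuousOn f B' := by
    apply ContinuousOn.mul _ hbf_cont
    have hc : ContinuousOn (fun x : EuclideanSpace ℝ (Fin n) =>
        (b i0 - x i0)⁻¹ - (b i0 - a i0)⁻¹) B' := by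
      apply ContinuousOn.sub _ continuousOn_const
      apply ContinuousOn.inv₀
      · exact (continuous_const.sub (EuclideanSpace.proj (𝕜 := ℝ) i0).continuous).continuousOn
      · intro x hx
        have := (hBx x hx).1
        have : 0 < b i0 - x i0 := by linarith
        exact this.ne'
    have : (fun x : EuclideanSpace ℝ (Fin n) => η (x i0)) =
        fun x => (b i0 - x i0)⁻¹ - (b i0 - a i0)⁻¹ := by
      funext x; rw [hη]
    rw [this]
    exact hc
  obtain ⟨x₀, hx₀B, hmax⟩ := hcpt.exists_isMaxOn hne hf_cont
  have hmax' : ∀ y ∈ B', f y ≤ f x₀ := fun y hy => hmax hy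
  set M := f x₀ with hM
  have hMz : 0 < f z := by
    apply mul_pos
    · apply hηpos
      · rw [hz_coord]; linarith [hub_lt i0]
      · rw [hz_coord, hub0]; have := hub_lt i0; rw [hub0] at this; linarith
    · exact hbf_pos z hzB
  have hMpos : 0 < M := lt_of_lt_of_le hMz (hmax' z hzB)
  have hGreatest : IsGreatest (f '' B') M := by
    constructor
    · exact ⟨x₀, hx₀B, rfl⟩
    · rintro y ⟨x, hx, rfl⟩
      exact hmax' x hx
  have hSup : sSup (f '' B') = M := hGreatest.csSup_eq
  -- the maximizer is not interior
  have hx₀_not_int : x₀ ∉ interior B' := by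
    intro hint
    have hcoord := hint
    rw [hInt] at hcoord
    set t0 := x₀ i0 with ht0def
    have ht0Ioo : a i0 < t0 ∧ t0 < b i0 - r := by
      have := hcoord i0
      rw [hub0] at this
      exact ⟨this.1, this.2⟩
    have ht0b : t0 < b i0 := by linarith [ht0Ioo.2]
    have he0 : 0 < η t0 := hηpos t0 ht0Ioo.1 ht0b
    set C : ℝ := (b i0 - a i0)⁻¹ with hC
    set s : Set ℝ := Ioo (a i0) (b i0) with hs
    have ht0s : t0 ∈ s := ⟨ht0Ioo.1, ht0b⟩
    have hposs : ∀ t ∈ s, 0 < b i0 - t ∧ 0 < (b i0 - t)⁻¹ - C := by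
      intro t ht
      refine ⟨by linarith [ht.2], ?_⟩
      have := hηpos t ht.1 ht.2
      rw [hη] at this
      exact this
    obtain ⟨hcd, hder, hder2⟩ := DI.scalar_calc M (b i0) C t0 s isOpen_Ioo ht0s hposs
    set g : ℝ → ℝ := fun t => M * ((b i0 - t)⁻¹ - C)⁻¹ with hg
    set ψ : EuclideanSpace ℝ (Fin n) → ℝ := fun x => g (x i0) with hψ
    have hgeq : ∀ t, g t = M * (η t)⁻¹ := by
      intro t; rw [hg, hη]
    have hψx₀ : ψ x₀ = bf x₀ := by
      have : ψ x₀ = M * (η t0)⁻¹ := hgeq t0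
      rw [this, hM, hf]
      field_simp
      exact mul_comm _ _
    have hψ_cd : ContDiffAt ℝ 2 ψ x₀ := by
      have h1 : ContDiffAt ℝ 2 g t0 := hcd.contDiffAt (isOpen_Ioo.mem_nhds ht0s)
      exact h1.comp (f := fun x : EuclideanSpace ℝ (Fin n) => x i0) x₀ ((EuclideanSpace.proj (𝕜 := ℝ) i0).contDiff.contDiffAt)
    have h_ev : ∀ᶠ y in nhds x₀, bf y ≤ ψ y := by
      filter_upwards [isOpen_interior.mem_nhds hint] with y hy
      have hyB : y ∈ B' := interior_subset hy
      have hyc := hy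
      rw [hInt] at hyc
      have hy0 := hyc i0
      rw [hub0] at hy0
      have hηy : 0 < η (y i0) := hηpos _ hy0.1 (by linarith [hy0.2])
      have h1 : η (y i0) * bf y ≤ M := hmax' y hyB
      have h2 : ψ y = M * (η (y i0))⁻¹ := hgeq (y i0)
      rw [h2, mul_comm M]
      rw [← div_eq_inv_mul]
      rw [le_div_iff₀ hηy]
      linarith [h1]
    have hineq := hJacobi ψ x₀ hint hψ_cd h_ev hψx₀
    -- compute gradient
    set d : ℝ := -M * ((b i0 - t0)^2)⁻¹ * (((b i0 - t0)⁻¹ - C)^2)⁻¹ with hd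
    have hgrad : gradient ψ x₀ = d • EuclideanSpace.single i0 (1:ℝ) :=
      DI.grad_comp i0 g d x₀ hder
    have hgradi : ∀ i, gradient ψ x₀ i = if i = i0 then d else 0 := by
      intro i
      rw [hgrad]
      by_cases h : i = i0
      · subst h; simp [EuclideanSpace.single_apply]
      · simp [EuclideanSpace.single_apply, h, Ne.symm h]
    set D : ℝ := deriv (deriv g) t0 with hD
    have hhess : ∀ i j, hessianMatrix n ψ x₀ i j =
        (if i = i0 then 1 else 0) * (if j = i0 then 1 else 0) * D := by
      intro i j
      exact DI.hess_comp i0 g s isOpen_Ioo hcd x₀ ht0s i j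
    -- compute the sums
    have hsum1 : (∑ i, ∑ j, A x₀ i j * gradient ψ x₀ i * gradient ψ x₀ j)
        = A x₀ i0 i0 * d * d := by
      rw [Finset.sum_eq_single i0]
      · rw [Finset.sum_eq_single i0]
        · rw [hgradi i0]; simp
        · intro j _ hj
          rw [hgradi j]; simp [hj]
        · intro h; exact absurd (Finset.mem_univ i0) h
      · intro i _ hi
        have : gradient ψ x₀ i = 0 := by rw [hgradi i]; simp [hi]
        simp [this]
      · intro h; exact absurd (Finset.mem_univ i0) h
    have hsum2 : (∑ i, ∑ j, A x₀ i j * hessianMatrix n ψ x₀ i j)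
        = A x₀ i0 i0 * D := by
      rw [Finset.sum_eq_single i0]
      · rw [Finset.sum_eq_single i0]
        · rw [hhess i0 i0]; simp
        · intro j _ hj
          rw [hhess i0 j]; simp [hj]
        · intro h; exact absurd (Finset.mem_univ i0) h
      · intro i _ hi
        have : ∀ j, A x₀ i j * hessianMatrix n ψ x₀ i j = 0 := by
          intro j; rw [hhess i j]; simp [hi]
        simp [this]
      · intro h; exact absurd (Finset.mem_univ i0) h
    rw [hsum1, hsum2] at hineq
    -- positivity of A00
    have hA00 : 0 < A x₀ i0 i0 := by
      have hpd := (hA x₀ hx₀B).2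
      have hne0 : (Pi.single i0 1 : Fin n → ℝ) ≠ 0 := by
        intro hcon
        have := congrFun hcon i0
        simp at this
      have := hpd.dotProduct_mulVec_pos hne0
      simpa [Matrix.mulVec_single, single_dotProduct, Pi.single_apply] using this
    -- final contradiction
    have hu : 0 < b i0 - t0 := by linarith
    have he : 0 < (b i0 - t0)⁻¹ - C := by
      have := he0; rw [hη] at this; exact this
    have hψval : ψ x₀ = M * ((b i0 - t0)⁻¹ - C)⁻¹ := rfl
    rw [hψval] at hineq
    rw [hder2] at hineq
    have hv : 0 < (b i0 - t0)⁻¹ := inv_pos.2 hu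
    have hw : 0 < ((b i0 - t0)⁻¹ - C)⁻¹ := inv_pos.2 he
    revert hineq
    rw [hd]
    simp only [← inv_pow]
    generalize hE : ((b i0 - t0)⁻¹ - C)⁻¹ = E at hw ⊢
    generalize hV : (b i0 - t0)⁻¹ = V at hv ⊢
    intro hineq
    have hlt : A x₀ i0 i0 * (-2*M*V^3 * E^2 + 2*M*V^4 * E^3)
        < 2 * (A x₀ i0 i0 * (-M * V^2 * E^2) * (-M * V^2 * E^2)) / (M * E) := by
      rw [lt_div_iff₀ (by positivity)]
      have key : A x₀ i0 i0 * (-2*M*V^3 * E^2 + 2*M*V^4 * E^3) * (M * E)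
          = 2 * (A x₀ i0 i0 * (-M * V^2 * E^2) * (-M * V^2 * E^2))
            - 2 * A x₀ i0 i0 * M^2 * V^3 * E^3 := by ring
      have hpos2 : 0 < 2 * A x₀ i0 i0 * M^2 * V^3 * E^3 := by positivity
      linarith
    exact absurd hineq (not_le.2 hlt)
  have hx₀front : x₀ ∈ frontier B' := by
    rw [hclosed.frontier_eq]
    exact ⟨hx₀B, hx₀_not_int⟩
  have hfsub : frontier B' ⊆ B' := by
    rw [hclosed.frontier_eq]; exact diff_subset
  have hbddB : BddAbove (f '' B') := ⟨M, hGreatest.2⟩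
  constructor
  · apply le_antisymm
    · rw [hSup]
      exact le_csSup (hbddB.mono (image_mono hfsub)) ⟨x₀, hx₀front, rfl⟩
    · exact csSup_le_csSup hbddB ⟨f x₀, ⟨x₀, hx₀front, rfl⟩⟩ (image_mono hfsub)
  · rw [hSup]
    set R := frontier B' \ {x ∈ B' | x i0 = a i0} with hR
    have hRsub : R ⊆ B' := fun x hx => hfsub hx.1
    have hbddR : BddAbove (bf '' R) :=
      (hcpt.image_of_continuousOn hbf_cont).bddAbove.mono (image_mono hRsub)
    set w : EuclideanSpace ℝ (Fin n) :=
      (WithLp.equiv 2 _).symm (fun i => if i = i0 then b i0 - r else (a i + b i)/2) with hw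
    have hw_coord : ∀ i, w i = if i = i0 then b i0 - r else (a i + b i)/2 := fun i => rfl
    have hwB : w ∈ B' := by
      rw [hB2]; intro i
      by_cases h : i = i0
      · subst h
        rw [hw_coord]
        simp only [eq_self_iff_true, if_true, if_pos rfl, hub0]
        exact ⟨by linarith [hab1r], le_refl _⟩
      · rw [hw_coord]
        simp only [if_neg h]
        have hub2 : ub i = b i := by simp [hub, h]
        rw [hub2]
        exact ⟨by linarith [hab i h], by linarith [hab i h]⟩
    have hw_not_int : w ∉ interior B' := by
      rw [hInt]; intro hcon
      have h1 := (hcon i0).2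
      rw [hw_coord, hub0] at h1
      simp only [eq_self_iff_true, if_true, if_pos rfl] at h1
      linarith
    have hwR : w ∈ R := by
      constructor
      · rw [hclosed.frontier_eq]; exact ⟨hwB, hw_not_int⟩
      · intro hcon
        have h1 := hcon.2
        rw [hw_coord] at h1
        simp only [eq_self_iff_true, if_true, if_pos rfl] at h1
        linarith [hab1r]
    have hbfw : 0 < bf w := hbf_pos w hwB
    have hsupR : bf w ≤ sSup (bf '' R) := le_csSup hbddR ⟨w, hwR, rfl⟩
    by_cases hcase : x₀ i0 = a i0
    · have hM0 : M = 0 := by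
        rw [hM, hf]
        simp only [hcase, hη, sub_self, zero_mul]
      rw [hM0]
      exact mul_nonneg (inv_nonneg.2 hr.le) (le_trans hbfw.le hsupR)
    · have hx₀R : x₀ ∈ R := ⟨hx₀front, fun hcon => hcase hcon.2⟩
      have hη_le : η (x₀ i0) ≤ r⁻¹ := by
        rw [hη]
        have h1 : x₀ i0 ≤ b i0 - r := (hBx x₀ hx₀B).1
        have h2 : r ≤ b i0 - x₀ i0 := by linarith
        have h3 : (b i0 - x₀ i0)⁻¹ ≤ r⁻¹ := by
          apply inv_anti₀ hr h2
        have h4 : 0 < (b i0 - a i0)⁻¹ := inv_pos.2 (by linarith [hab1])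
        linarith
      have hbf0 : 0 ≤ bf x₀ := (hbf_pos x₀ hx₀B).le
      calc M = η (x₀ i0) * bf x₀ := hM
        _ ≤ r⁻¹ * bf x₀ := mul_le_mul_of_nonneg_right hη_le hbf0
        _ ≤ r⁻¹ * sSup (bf '' R) :=
            mul_le_mul_of_nonneg_left (le_csSup hbddR ⟨x₀, hx₀R, rfl⟩) (inv_nonneg.2 hr.le)


end
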